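/- In the Jordanian quantum group algebra A(R), the quantum determinant D = ad - bc + hac satisfies Da = aD + (h-g)cD and Dd = dD - (h-g)cD. -/
import Mathlib


/-- Generators of the Jordanian quantum group algebra `A(R)`. -/
inductive JGen : Type | a | b | c | d

noncomputable def Fa : FreeAlgebra ℂ JGen := FreeAlgebra.ι ℂ JGen.a
noncomputable def Fb : FreeAlgebra ℂ JGen := FreeAlgebra.ι ℂ JGen.b
noncomputable def Fc : FreeAlgebra ℂ JGen := FreeAlgebra.ι ℂ JGen.c
noncomputable def Fd : FreeAlgebra ℂ JGen := FreeAlgebra.ι ℂ JGen.d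

/-- The six defining relations of the Jordanian quantum group `GL_{h,g}(2)`. -/
inductive JRel (h g : ℂ) : FreeAlgebra ℂ JGen → FreeAlgebra ℂ JGen → Prop
  | ca : JRel h g (Fc * Fa) (Fa * Fc - g • (Fc * Fc))
  | cd : JRel h g (Fc * Fd) (Fd * Fc - h • (Fc * Fc))
  | db : JRel h g (Fd * Fb) (Fb * Fd + g • (Fa * Fd - Fb * Fc + h • (Fa * Fc) - Fd * Fd))
  | ab : JRel h g (Fa * Fb) (Fb * Fa + h • (Fa * Fd - Fb * Fc + h • (Fa * Fc) - Fa * Fa))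
  | cb : JRel h g (Fc * Fb) (Fb * Fc - h • (Fa * Fc) - g • (Fd * Fc) + (g * h) • (Fc * Fc))
  | da : JRel h g (Fd * Fa) (Fa * Fd + h • (Fa * Fc) - g • (Fd * Fc))

/-- The Jordanian quantum group algebra `A(R)`. -/
abbrev JA (h g : ℂ) := RingQuot (JRel h g)

noncomputable def qa (h g : ℂ) : JA h g := RingQuot.mkAlgHom ℂ (JRel h g) Fa
noncomputable def qb (h g : ℂ) : JA h g := RingQuot.mkAlgHom ℂ (JRel h g) Fb
noncomputable def qc (h g : ℂ) : JA h g := RingQuot.mkAlgHom ℂ (JRel h g) Fc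
noncomputable def qd (h g : ℂ) : JA h g := RingQuot.mkAlgHom ℂ (JRel h g) Fd

/-- The quantum determinant `D = ad - bc + hac`. -/
noncomputable def qdet (h g : ℂ) : JA h g :=
  qa h g * qd h g - qb h g * qc h g + h • (qa h g * qc h g)

section Rels

variable (h g : ℂ)

private lemma rel_ca : qc h g * qa h g = qa h g * qc h g - g • (qc h g * qc h g) := by
  have := RingQuot.mkAlgHom_rel ℂ (JRel.ca (h := h) (g := g))
  simpa [qa, qb, qc, qd, map_mul, map_sub, map_add, map_smul] using this

private lemma rel_cd : qc h g * qd h g = qd h g * qc h g - h • (qc h g * qc h g) := by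
  have := RingQuot.mkAlgHom_rel ℂ (JRel.cd (h := h) (g := g))
  simpa [qa, qb, qc, qd, map_mul, map_sub, map_add, map_smul] using this

private lemma rel_db : qd h g * qb h g = qb h g * qd h g +
    g • (qa h g * qd h g - qb h g * qc h g + h • (qa h g * qc h g) - qd h g * qd h g) := by
  have := RingQuot.mkAlgHom_rel ℂ (JRel.db (h := h) (g := g))
  simpa [qa, qb, qc, qd, map_mul, map_sub, map_add, map_smul] using this

private lemma rel_ab : qa h g * qb h g = qb h g * qa h g +
    h • (qa h g * qd h g - qb h g * qc h g + h • (qa h g * qc h g) - qa h g * qa h g) := by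
  have := RingQuot.mkAlgHom_rel ℂ (JRel.ab (h := h) (g := g))
  simpa [qa, qb, qc, qd, map_mul, map_sub, map_add, map_smul] using this

private lemma rel_cb : qc h g * qb h g = qb h g * qc h g - h • (qa h g * qc h g) -
    g • (qd h g * qc h g) + (g * h) • (qc h g * qc h g) := by
  have := RingQuot.mkAlgHom_rel ℂ (JRel.cb (h := h) (g := g))
  simpa [qa, qb, qc, qd, map_mul, map_sub, map_add, map_smul] using this

private lemma rel_da : qd h g * qa h g = qa h g * qd h g + h • (qa h g * qc h g) -
    g • (qd h g * qc h g) := by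
  have := RingQuot.mkAlgHom_rel ℂ (JRel.da (h := h) (g := g))
  simpa [qa, qb, qc, qd, map_mul, map_sub, map_add, map_smul] using this

private lemma rel_ca' (x : JA h g) : qc h g * (qa h g * x) =
    qa h g * (qc h g * x) - g • (qc h g * (qc h g * x)) := by
  rw [← mul_assoc, rel_ca, sub_mul, smul_mul_assoc, mul_assoc, mul_assoc]

private lemma rel_cd' (x : JA h g) : qc h g * (qd h g * x) =
    qd h g * (qc h g * x) - h • (qc h g * (qc h g * x)) := by
  rw [← mul_assoc, rel_cd, sub_mul, smul_mul_assoc, mul_assoc, mul_assoc]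

private lemma rel_db' (x : JA h g) : qd h g * (qb h g * x) = qb h g * (qd h g * x) +
    g • (qa h g * (qd h g * x) - qb h g * (qc h g * x) + h • (qa h g * (qc h g * x)) -
      qd h g * (qd h g * x)) := by
  rw [← mul_assoc, rel_db, add_mul, smul_mul_assoc, sub_mul, add_mul, sub_mul, smul_mul_assoc]
  simp only [mul_assoc]

private lemma rel_ab' (x : JA h g) : qa h g * (qb h g * x) = qb h g * (qa h g * x) +
    h • (qa h g * (qd h g * x) - qb h g * (qc h g * x) + h • (qa h g * (qc h g * x)) -
      qa h g * (qa h g * x)) := by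
  rw [← mul_assoc, rel_ab, add_mul, smul_mul_assoc, sub_mul, add_mul, sub_mul, smul_mul_assoc]
  simp only [mul_assoc]

private lemma rel_cb' (x : JA h g) : qc h g * (qb h g * x) = qb h g * (qc h g * x) -
    h • (qa h g * (qc h g * x)) - g • (qd h g * (qc h g * x)) +
    (g * h) • (qc h g * (qc h g * x)) := by
  rw [← mul_assoc, rel_cb, add_mul, sub_mul, sub_mul, smul_mul_assoc, smul_mul_assoc,
    smul_mul_assoc]
  simp only [mul_assoc]

private lemma rel_da' (x : JA h g) : qd h g * (qa h g * x) = qa h g * (qd h g * x) +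
    h • (qa h g * (qc h g * x)) - g • (qd h g * (qc h g * x)) := by
  rw [← mul_assoc, rel_da, sub_mul, add_mul, smul_mul_assoc, smul_mul_assoc]
  simp only [mul_assoc]

end Rels

/-- In `A(R)`: `Da = aD + (h-g)cD` and `Dd = dD - (h-g)cD`. -/
theorem qdet_comm_a_d (h g : ℂ) :
    qdet h g * qa h g = qa h g * qdet h g + (h - g) • (qc h g * qdet h g) ∧
    qdet h g * qd h g = qd h g * qdet h g - (h - g) • (qc h g * qdet h g) := by
  constructor <;>
  · simp only [qdet, sub_mul, add_mul, mul_sub, mul_add, smul_mul_assoc, mul_smul_comm,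
      smul_add, smul_sub, smul_smul, mul_assoc, rel_ca, rel_cd, rel_db, rel_ab, rel_cb,
      rel_da, rel_ca', rel_cd', rel_db', rel_ab', rel_cb', rel_da']
    module
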